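/- arXiv:1307.3634 — 2 statements merged into one kernel-verified Lean document; each statement's English description precedes it below -/
import Mathlib

section
/- Let X be a compact metric space, C(X) the space of continuous real functions with the sup norm, and let F : C(X) → ℝ be defined as F(u) = inf over a family of continuous affine functionals of u (in particular F is concave and 1-Lipschitz in sup norm). Suppose F is Gateaux differentiable at u* with differential given by a probability measure μ* (i.e. d/dt F(u* + tv)|_{t=0} = ∫ v dμ* for all v ∈ C(X)). Suppose H_N : X^N → ℝ are symmetric functions, x*_N ∈ X^N minimizes (H_N + Σᵢ u*(xᵢ))/N, and for every u ∈ C(X), lim_{N→∞} inf_{X^N} (H_N + Σᵢ u(xᵢ))/N = F(u* + u - u*) exists (i.e. the limit F(u) exists for all u). Then the empirical measures δ_N(x*_N) := (1/N) Σᵢ δ_{(x*_N)ᵢ} converge weakly to μ*. -/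
/-!
Perturbing `u*` in a direction `v`, the configuration `x*_N` is a competitor for the perturbed
problem, so `t ↦ inf (H_N + ∑ (u* + t v)(yᵢ))/N` lies below the line through its value at `0`
with slope `(1/N) ∑ v(x*_N,i)`. Letting `N → ∞` for fixed `t` traps these slopes between the
one-sided difference quotients of `t ↦ F(u* + t v)` at `0`, which both tend to `∫ v dμ*`.
-/

open Filter MeasureTheory Topology

theorem tendsto_of_le_add_mul_of_hasDerivAt {ι : Type*} {l : Filter ι} {I : ι → ℝ → ℝ}
    {f : ℝ → ℝ} {a : ι → ℝ} {x L : ℝ}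
    (hI : ∀ t, Tendsto (fun n => I n t) l (𝓝 (f t))) (hf : HasDerivAt f L x)
    (hsup : ∀ n t, I n (x + t) ≤ I n x + t * a n) :
    Tendsto a l (𝓝 L) := by
  have hquot : ∀ t, Tendsto (fun n => t⁻¹ • (I n (x + t) - I n x)) l
      (𝓝 (t⁻¹ • (f (x + t) - f x))) :=
    fun t => ((hI _).sub (hI x)).const_smul t⁻¹
  refine tendsto_order.2 ⟨fun b hb => ?_, fun b hb => ?_⟩
  · obtain ⟨t, hbt, ht⟩ :=
      ((hf.tendsto_slope_zero_right.eventually (lt_mem_nhds hb)).and self_mem_nhdsWithin).exists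
    filter_upwards [(hquot t).eventually (lt_mem_nhds hbt)] with n hn
    refine hn.trans_le ?_
    rw [smul_eq_mul, inv_mul_eq_div, div_le_iff₀' ht]
    linarith [hsup n t]
  · obtain ⟨t, hbt, ht⟩ :=
      ((hf.tendsto_slope_zero_left.eventually (gt_mem_nhds hb)).and self_mem_nhdsWithin).exists
    filter_upwards [(hquot t).eventually (gt_mem_nhds hbt)] with n hn
    refine lt_of_le_of_lt ?_ hn
    rw [smul_eq_mul, inv_mul_eq_div, le_div_iff_of_neg' ht]
    linarith [hsup n t]

noncomputable def minAvgEnergy {X : Type*} [TopologicalSpace X] {N : ℕ}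
    (H : (Fin N → X) → ℝ) (u : C(X, ℝ)) : ℝ :=
  ⨅ y : Fin N → X, (H y + ∑ i, u (y i)) / N

section MinAvgEnergy

variable {X : Type*} [TopologicalSpace X] [CompactSpace X] {N : ℕ} {H : (Fin N → X) → ℝ}
  {u : C(X, ℝ)} {x : Fin N → X}

theorem bddBelow_range_avgEnergy_of_minimizer
    (hmin : ∀ y, H x + ∑ i, u (x i) ≤ H y + ∑ i, u (y i)) (w : C(X, ℝ)) :
    BddBelow (Set.range fun y : Fin N → X => (H y + ∑ i, w (y i)) / N) := by
  refine ⟨(H x + ∑ i, u (x i) - N * ‖u - w‖) / N, ?_⟩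
  rintro _ ⟨y, rfl⟩
  have hdiff : ∑ i, u (y i) - ∑ i, w (y i) ≤ N * ‖u - w‖ := by
    calc ∑ i, u (y i) - ∑ i, w (y i) = ∑ i, (u - w) (y i) := by
          simp only [ContinuousMap.sub_apply, Finset.sum_sub_distrib]
      _ ≤ ∑ _i : Fin N, ‖u - w‖ :=
          Finset.sum_le_sum fun i _ => (le_abs_self _).trans ((u - w).norm_coe_le_norm (y i))
      _ = N * ‖u - w‖ := by simp
  exact div_le_div_of_nonneg_right (by linarith [hmin y]) N.cast_nonneg

theorem minAvgEnergy_add_smul_le (hmin : ∀ y, H x + ∑ i, u (x i) ≤ H y + ∑ i, u (y i))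
    (v : C(X, ℝ)) (t : ℝ) :
    minAvgEnergy H (u + t • v) ≤ minAvgEnergy H u + t * ((∑ i, v (x i)) / N) := by
  have : Nonempty (Fin N → X) := ⟨x⟩
  have hmin_le : (H x + ∑ i, u (x i)) / N ≤ minAvgEnergy H u :=
    le_ciInf fun y => div_le_div_of_nonneg_right (hmin y) N.cast_nonneg
  calc minAvgEnergy H (u + t • v) ≤ (H x + ∑ i, (u + t • v) (x i)) / N :=
        ciInf_le (bddBelow_range_avgEnergy_of_minimizer hmin _) x
    _ = (H x + ∑ i, u (x i)) / N + t * ((∑ i, v (x i)) / N) := by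
        simp only [ContinuousMap.add_apply, ContinuousMap.smul_apply, smul_eq_mul,
          Finset.sum_add_distrib, ← Finset.mul_sum]
        ring
    _ ≤ minAvgEnergy H u + t * ((∑ i, v (x i)) / N) := by gcongr

end MinAvgEnergy

theorem empirical_measures_of_minimizers_converge_general
    {X : Type*} [MetricSpace X] [CompactSpace X]
    [MeasurableSpace X]
    (F : C(X, ℝ) → ℝ)
    (ustar : C(X, ℝ))
    (μstar : Measure X)
    (hGateaux : ∀ v : C(X, ℝ),
      HasDerivAt (fun t : ℝ => F (ustar + t • v)) (∫ x, v x ∂μstar) 0)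
    (H : ∀ N : ℕ, (Fin N → X) → ℝ)
    (xstar : ∀ N : ℕ, Fin N → X)
    (hmin : ∀ N (y : Fin N → X),
      H N (xstar N) + ∑ i, ustar ((xstar N) i) ≤ H N y + ∑ i, ustar (y i))
    (hlim : ∀ u : C(X, ℝ),
      Tendsto (fun N : ℕ => ⨅ y : Fin N → X, (H N y + ∑ i, u (y i)) / N)
        atTop (nhds (F u))) :
    ∀ v : C(X, ℝ),
      Tendsto (fun N : ℕ => (∑ i, v ((xstar N) i)) / N) atTop
        (nhds (∫ x, v x ∂μstar)) := by
  intro v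
  refine tendsto_of_le_add_mul_of_hasDerivAt
    (I := fun N t => minAvgEnergy (H N) (ustar + t • v)) (fun t => hlim _) (hGateaux v) ?_
  intro N t
  simpa using minAvgEnergy_add_smul_le (hmin N) v t

/-- convergence of empirical measures of minimizers of perturbed
Hamiltonians towards the Gateaux differential (abstract Fekete points lemma). -/
theorem empirical_measures_of_minimizers_converge
    {X : Type*} [MetricSpace X] [CompactSpace X] [Nonempty X]
    [MeasurableSpace X] [BorelSpace X]
    (F : C(X, ℝ) → ℝ)
    (hconc : ConcaveOn ℝ Set.univ F) (hlip : LipschitzWith 1 F)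
    (ustar : C(X, ℝ))
    (μstar : Measure X) [IsProbabilityMeasure μstar]
    (hGateaux : ∀ v : C(X, ℝ),
      HasDerivAt (fun t : ℝ => F (ustar + t • v)) (∫ x, v x ∂μstar) 0)
    (H : ∀ N : ℕ, (Fin N → X) → ℝ)
    (hsymm : ∀ N (σ : Equiv.Perm (Fin N)) (x : Fin N → X),
      H N (fun i => x (σ i)) = H N x)
    (xstar : ∀ N : ℕ, Fin N → X)
    (hmin : ∀ N (y : Fin N → X),
      H N (xstar N) + ∑ i, ustar ((xstar N) i) ≤ H N y + ∑ i, ustar (y i))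
    (hlim : ∀ u : C(X, ℝ),
      Tendsto (fun N : ℕ => ⨅ y : Fin N → X, (H N y + ∑ i, u (y i)) / N)
        atTop (nhds (F u))) :
    ∀ v : C(X, ℝ),
      Tendsto (fun N : ℕ => (∑ i, v ((xstar N) i)) / N) atTop
        (nhds (∫ x, v x ∂μstar)) :=
  empirical_measures_of_minimizers_converge_general F ustar μstar hGateaux H xstar hmin hlim
end

section
/- Let f be holomorphic on the open unit disc in ℂ, and let φ : Δ → ℝ be a C¹ function satisfying |∂φ/∂z| ≤ C/|z| on the punctured disc. Fix z₀ with 0 < |z₀| < 1/2 and 0 < δ < 1/2, and set r₀ := δ|z₀|. Then for any k ≥ 1: |f(z₀)|² e^{-(k-1)φ(z₀)} ≤ δ^{-2} |z₀|^{-2} e^{2C'δ(k-1)} · (1/π) ∫_{|z - z₀| < r₀} |f(z)|² e^{-(k-1)φ(z)} dλ(z), where C' is a constant depending only on C. -/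
/-!
Applied to `f ^ 2`, the area mean value property `∫_{B(z₀, r)} g = π r² g(z₀)` of holomorphic
functions (the circle mean value property integrated in polar coordinates) gives
`π r² |f(z₀)|² ≤ ∫_{B(z₀, r)} |f|²`. For `r = δ|z₀|` with `δ ≤ 1/2`, every point of `B(z₀, r)` has
modulus at least `|z₀|/2`, so `|∇φ| ≤ 2C/|z₀|` there and the mean value inequality bounds the
oscillation of `φ` on the disc by `2Cδ`. Hence the weight `e^{-(k-1)φ}` is at least
`e^{-(k-1)φ(z₀)} e^{-2Cδ(k-1)}` on the disc, which gives the claim with `C' = C`.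
-/

open MeasureTheory Metric Real Set

theorem circleMap_eq_add_polarCoord_symm (c : ℂ) (r θ : ℝ) :
    circleMap c r θ = c + Complex.polarCoord.symm (r, θ) := by
  rw [Complex.polarCoord_symm_apply, circleMap, Complex.exp_mul_I]
  push_cast
  ring

theorem circleAverage_eq_setIntegral_Ioo {E : Type*} [NormedAddCommGroup E] [NormedSpace ℝ E]
    (g : ℂ → E) (c : ℂ) (r : ℝ) :
    circleAverage g c r = (2 * π)⁻¹ • ∫ θ in Ioo (-π) π, g (circleMap c r θ) := by
  rw [circleAverage_eq_integral_add (-π), intervalIntegral.integral_comp_add_right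
    (fun θ ↦ g (circleMap c r θ)), intervalIntegral.integral_of_le (by linarith [pi_pos]),
    integral_Ioc_eq_integral_Ioo, zero_add, show 2 * π + -π = π by ring]

theorem integral_ball_eq_intervalIntegral_circleAverage {E : Type*} [NormedAddCommGroup E]
    [NormedSpace ℝ E] [CompleteSpace E] {g : ℂ → E} {c : ℂ} {R : ℝ} (hR : 0 ≤ R)
    (hg : ContinuousOn g (closedBall c R)) :
    ∫ z in ball c R, g z = ∫ r in 0..R, (2 * π * r) • circleAverage g c r := by
  set F : ℝ × ℝ → E := fun p ↦ p.1 • g (circleMap c p.1 p.2)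
  have hpolar : ∫ z in ball c R, g z = ∫ p in Ioo 0 R ×ˢ Ioo (-π) π, F p :=
    calc ∫ z in ball c R, g z = ∫ z, (ball c R).indicator g (c + z) := by
          rw [← integral_indicator measurableSet_ball, integral_add_left_eq_self]
      _ = ∫ p in polarCoord.target, p.1 • (ball c R).indicator g (circleMap c p.1 p.2) := by
          simp_rw [← Complex.integral_comp_polarCoord_symm, circleMap_eq_add_polarCoord_symm]
      _ = ∫ p in polarCoord.target, (Iio R ×ˢ univ).indicator F p := by
          refine setIntegral_congr_fun polarCoord.open_target.measurableSet fun p hpt ↦ ?_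
          have hp : 0 < p.1 := hpt.1
          by_cases hpR : p.1 < R
          · have : circleMap c p.1 p.2 ∈ ball c R := by
              simpa [dist_eq_norm, circleMap_sub_center, abs_of_pos hp] using hpR
            simp [F, indicator_of_mem this, hpR]
          · have : circleMap c p.1 p.2 ∉ ball c R := by
              simpa [dist_eq_norm, circleMap_sub_center, abs_of_pos hp] using hpR
            simp [F, indicator_of_notMem this, hpR]
      _ = ∫ p in Ioo 0 R ×ˢ Ioo (-π) π, F p := by
          rw [setIntegral_indicator (measurableSet_Iio.prod MeasurableSet.univ)]
          congr 2
          change Ioi 0 ×ˢ Ioo (-π) π ∩ Iio R ×ˢ univ = _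
          rw [prod_inter_prod, Ioi_inter_Iio, inter_univ]
  have hF : IntegrableOn F (Ioo 0 R ×ˢ Ioo (-π) π) (volume.prod volume) := by
    have hmaps : MapsTo (fun p : ℝ × ℝ ↦ circleMap c p.1 p.2) (Icc 0 R ×ˢ Icc (-π) π)
        (closedBall c R) := fun p hp ↦ by
      simpa [dist_eq_norm, circleMap_sub_center, abs_of_nonneg hp.1.1] using hp.1.2
    have hcont : ContinuousOn F (Icc 0 R ×ˢ Icc (-π) π) :=
      continuousOn_fst.smul (hg.comp (by fun_prop) hmaps)
    rw [← Measure.volume_eq_prod]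
    exact (hcont.integrableOn_compact (isCompact_Icc.prod isCompact_Icc)).mono_set
      (prod_mono Ioo_subset_Icc_self Ioo_subset_Icc_self)
  rw [hpolar, Measure.volume_eq_prod, setIntegral_prod F hF, intervalIntegral.integral_of_le hR,
    integral_Ioc_eq_integral_Ioo]
  refine setIntegral_congr_fun measurableSet_Ioo fun r _ ↦ ?_
  rw [circleAverage_eq_setIntegral_Ioo, integral_smul, smul_smul]
  congr 1
  field_simp

theorem DiffContOnCl.integral_ball_eq_smul {E : Type*} [NormedAddCommGroup E] [NormedSpace ℂ E]
    [CompleteSpace E] {g : ℂ → E} {c : ℂ} {R : ℝ} (hR : 0 ≤ R)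
    (hg : DiffContOnCl ℂ g (ball c R)) :
    ∫ z in ball c R, g z = (π * R ^ 2) • g c := by
  rw [integral_ball_eq_intervalIntegral_circleAverage hR hg.continuousOn_ball,
    intervalIntegral.integral_congr (g := fun r ↦ (2 * π * r) • g c),
    intervalIntegral.integral_smul_const, intervalIntegral.integral_const_mul, integral_id]
  · congr 1
    ring
  · intro r hr
    rw [uIcc_of_le hR] at hr
    simp only [(hg.mono (ball_subset_ball (abs_of_nonneg hr.1 ▸ hr.2))).circleAverage]

theorem DiffContOnCl.mul_sq_norm_le_integral_ball {f : ℂ → ℂ} {c : ℂ} {R : ℝ} (hR : 0 ≤ R)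
    (hf : DiffContOnCl ℂ f (ball c R)) :
    π * R ^ 2 * ‖f c‖ ^ 2 ≤ ∫ z in ball c R, ‖f z‖ ^ 2 :=
  calc π * R ^ 2 * ‖f c‖ ^ 2 = ‖∫ z in ball c R, f z • f z‖ := by
        rw [(hf.smul hf).integral_ball_eq_smul hR, norm_smul,
          Real.norm_of_nonneg (by positivity : 0 ≤ π * R ^ 2), smul_eq_mul, norm_mul, sq ‖f c‖]
    _ ≤ ∫ z in ball c R, ‖f z‖ ^ 2 :=
        (norm_integral_le_integral_norm _).trans_eq (by simp only [smul_eq_mul, norm_mul, sq])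

theorem DiffContOnCl.mul_sq_norm_le_integral_ball_mul {f : ℂ → ℂ} {w : ℂ → ℝ} {c : ℂ}
    {R m : ℝ} (hR : 0 ≤ R) (hf : DiffContOnCl ℂ f (ball c R))
    (hw : ContinuousOn w (closedBall c R)) (hm : 0 ≤ m) (hmw : ∀ z ∈ ball c R, m ≤ w z) :
    m * (π * R ^ 2 * ‖f c‖ ^ 2) ≤ ∫ z in ball c R, ‖f z‖ ^ 2 * w z := by
  have hf2 : ContinuousOn (fun z ↦ ‖f z‖ ^ 2) (closedBall c R) :=
    hf.continuousOn_ball.norm.pow 2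
  have hint : ∀ {u : ℂ → ℝ}, ContinuousOn u (closedBall c R) → IntegrableOn u (ball c R) :=
    fun hu ↦ (hu.integrableOn_compact (isCompact_closedBall c R)).mono_set ball_subset_closedBall
  calc m * (π * R ^ 2 * ‖f c‖ ^ 2) ≤ m * ∫ z in ball c R, ‖f z‖ ^ 2 :=
        mul_le_mul_of_nonneg_left (hf.mul_sq_norm_le_integral_ball hR) hm
    _ = ∫ z in ball c R, ‖f z‖ ^ 2 * m := by rw [integral_mul_const, mul_comm]
    _ ≤ ∫ z in ball c R, ‖f z‖ ^ 2 * w z :=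
        setIntegral_mono_on (hint (hf2.mul continuousOn_const)) (hint (hf2.mul hw))
          measurableSet_ball fun z hz ↦ mul_le_mul_of_nonneg_left (hmw z hz) (by positivity)

theorem abs_sub_le_of_norm_fderiv_le_div_norm {E : Type*} [NormedAddCommGroup E]
    [NormedSpace ℝ E] {φ : E → ℝ} {C r : ℝ} {z₀ z : E} (hC : 0 ≤ C) (hr : r ≤ ‖z₀‖ / 2)
    (hφ : DifferentiableOn ℝ φ (ball z₀ r))
    (hbound : ∀ w ∈ ball z₀ r, w ≠ 0 → ‖fderiv ℝ φ w‖ ≤ C / ‖w‖) (hz : z ∈ ball z₀ r) :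
    |φ z - φ z₀| ≤ 2 * C * r / ‖z₀‖ := by
  have hr₀ : 0 < r := pos_of_mem_ball hz
  have hz₀ : 0 < ‖z₀‖ := by linarith
  have hderiv : ∀ w ∈ ball z₀ r, ‖fderiv ℝ φ w‖ ≤ 2 * C / ‖z₀‖ := fun w hw ↦ by
    have hw' : ‖z₀‖ / 2 ≤ ‖w‖ := by
      have := norm_sub_norm_le z₀ w
      rw [mem_ball, dist_eq_norm, norm_sub_rev] at hw
      linarith
    calc ‖fderiv ℝ φ w‖ ≤ C / ‖w‖ := hbound w hw (norm_pos_iff.1 (by linarith))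
      _ ≤ C / (‖z₀‖ / 2) := div_le_div_of_nonneg_left hC (by positivity) hw'
      _ = 2 * C / ‖z₀‖ := by field_simp
  have hmvt := (convex_ball z₀ r).norm_image_sub_le_of_norm_fderiv_le
    (fun w hw ↦ hφ.differentiableAt (isOpen_ball.mem_nhds hw)) hderiv (mem_ball_self hr₀) hz
  calc |φ z - φ z₀| ≤ 2 * C / ‖z₀‖ * ‖z - z₀‖ := hmvt
    _ ≤ 2 * C / ‖z₀‖ * r := by
        gcongr
        exact (mem_ball_iff_norm.1 hz).le
    _ = 2 * C * r / ‖z₀‖ := by ring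

/-- a weighted submean-value (Bernstein–Markov type) inequality for
holomorphic functions on the unit disc against a weight `φ` with `|∇φ(z)| ≤ C/|z|`. -/
theorem weighted_submean_inequality (C : ℝ) (hC : 0 < C) :
    ∃ C' : ℝ, 0 < C' ∧
      ∀ (f : ℂ → ℂ) (φ : ℂ → ℝ),
        DifferentiableOn ℂ f (ball (0 : ℂ) 1) →
        ContDiffOn ℝ 1 φ (ball (0 : ℂ) 1) →
        (∀ z ∈ ball (0 : ℂ) 1, z ≠ 0 → ‖fderiv ℝ φ z‖ ≤ C / ‖z‖) →
        ∀ z₀ : ℂ, 0 < ‖z₀‖ → ‖z₀‖ < 1 / 2 →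
        ∀ δ : ℝ, 0 < δ → δ < 1 / 2 →
        ∀ k : ℕ, 1 ≤ k →
          ‖f z₀‖ ^ 2 * Real.exp (-((k : ℝ) - 1) * φ z₀) ≤
            δ ^ (-(2 : ℝ)) * ‖z₀‖ ^ (-(2 : ℝ)) *
              Real.exp (2 * C' * δ * ((k : ℝ) - 1)) *
              ((1 / Real.pi) *
                ∫ z in ball z₀ (δ * ‖z₀‖),
                  ‖f z‖ ^ 2 * Real.exp (-((k : ℝ) - 1) * φ z) ∂volume) := by
  refine ⟨C, hC, fun f φ hf hφ hbound z₀ hz₀ hz₀' δ hδ hδ' k hk ↦ ?_⟩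
  set R := δ * ‖z₀‖ with hR_def
  set a : ℝ := k - 1
  have hR : 0 < R := by positivity
  have ha : 0 ≤ a := sub_nonneg.2 (by exact_mod_cast hk)
  have hsub : closedBall z₀ R ⊆ ball 0 1 := fun z hz ↦ by
    rw [mem_closedBall_iff_norm] at hz
    rw [mem_ball_zero_iff]
    nlinarith [norm_le_norm_add_norm_sub' z z₀]
  have hosc : ∀ z ∈ ball z₀ R, φ z ≤ φ z₀ + 2 * C * δ := fun z hz ↦ by
    have := abs_sub_le_of_norm_fderiv_le_div_norm hC.le (by nlinarith)
      ((hφ.differentiableOn one_ne_zero).mono (ball_subset_closedBall.trans hsub))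
      (fun w hw ↦ hbound w (hsub (ball_subset_closedBall hw))) hz
    rw [show 2 * C * R / ‖z₀‖ = 2 * C * δ by rw [hR_def]; field_simp] at this
    linarith [le_abs_self (φ z - φ z₀)]
  have hmean := (hf.diffContOnCl_ball hsub).mul_sq_norm_le_integral_ball_mul hR.le
    (w := fun z ↦ exp (-a * φ z)) (m := exp (-a * φ z₀ - 2 * C * δ * a))
    (continuous_exp.comp_continuousOn ((hφ.continuousOn.mono hsub).const_smul (-a)))
    (exp_pos _).le (fun z hz ↦ exp_le_exp.2 (by nlinarith [hosc z hz]))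
  rw [rpow_neg hδ.le, rpow_neg hz₀.le, rpow_two, rpow_two]
  calc ‖f z₀‖ ^ 2 * exp (-a * φ z₀)
      = (δ ^ 2)⁻¹ * (‖z₀‖ ^ 2)⁻¹ * exp (2 * C * δ * a) *
          (1 / π * (exp (-a * φ z₀ - 2 * C * δ * a) * (π * R ^ 2 * ‖f z₀‖ ^ 2))) := by
        rw [exp_sub, hR_def]
        field_simp
    _ ≤ _ := by gcongr
end
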